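/- Let n ≥ 2 be an integer, α ∈ ℝ, a > 0 and 0 ≤ ξ < a. Then F(n, α, a, ξ) < 0 if and only if ∫_{−a}^{(aξ+1)/(a−ξ)} (t − 1/a)(t + a)^{n−2} / (t² + 1)^{(n+2−α)/2} dt < 0. (This follows from the change of variables y₂ = a(a−ξ)/(1+a²) + ((a−ξ)/(1+a²)) t in the integral defining F.) -/

import Mathlib

/-!
The affine substitution `t = c s + a c` with `c = (a - ξ) / (1 + a²)` maps
`[-a, (aξ + 1)/(a - ξ)]` onto `[0, 1]`. Under it `a(1 - t) - ξ = c (1 - a s)`, `t = c (s + a)` and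
`ξ - a(1 - t) = c a (s - 1/a)`, so the integrand of `F` becomes a positive constant times
`(s - 1/a)(s + a)^{n-2} / (s² + 1)^{(n+2-α)/2}`; multiplying by positive constants does not change
the sign of an integral.
-/

/-- `F(n, α, a, ξ) = ∫₀¹ ((a(1−t) − ξ)² + t²)^{(α−n−2)/2} (ξ − a(1−t)) t^{n−2} dt`. -/
noncomputable def F (n : ℕ) (α a ξ : ℝ) : ℝ :=
  ∫ t in (0:ℝ)..1,
    ((a * (1 - t) - ξ) ^ 2 + t ^ 2) ^ ((α - n - 2) / 2) * (ξ - a * (1 - t)) * t ^ (n - 2)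

open intervalIntegral

noncomputable def FIntegrand (n : ℕ) (α a ξ t : ℝ) : ℝ :=
  ((a * (1 - t) - ξ) ^ 2 + t ^ 2) ^ ((α - n - 2) / 2) * (ξ - a * (1 - t)) * t ^ (n - 2)

noncomputable def FSubstIntegrand (n : ℕ) (α a s : ℝ) : ℝ :=
  (s - 1 / a) * (s + a) ^ (n - 2) / (s ^ 2 + 1) ^ (((n : ℝ) + 2 - α) / 2)

lemma FIntegrand_comp_affine {n : ℕ} {α a ξ c : ℝ} (ha : a ≠ 0)
    (hc : c * (1 + a ^ 2) = a - ξ) (s : ℝ) :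
    FIntegrand n α a ξ (c * s + a * c) =
      (c ^ 2 * (1 + a ^ 2)) ^ ((α - n - 2) / 2) * (c * a * c ^ (n - 2)) *
        FSubstIntegrand n α a s := by
  have hfirst : a * (1 - (c * s + a * c)) - ξ = c * (1 - a * s) := by
    linear_combination -hc
  have hsecond : c * s + a * c = c * (s + a) := by ring
  have hsign : ξ - a * (1 - (c * s + a * c)) = c * a * (s - 1 / a) := by
    linear_combination hc + c * mul_one_div_cancel ha
  have hbase : (a * (1 - (c * s + a * c)) - ξ) ^ 2 + (c * s + a * c) ^ 2 =
      (c ^ 2 * (1 + a ^ 2)) * (s ^ 2 + 1) := by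
    rw [hfirst, hsecond]; ring
  have hexp : (α - n - 2) / 2 = -(((n : ℝ) + 2 - α) / 2) := by ring
  rw [FIntegrand, FSubstIntegrand, hbase, hsign, hsecond,
    Real.mul_rpow (by positivity) (by positivity), mul_pow, hexp,
    Real.rpow_neg (by positivity : (0 : ℝ) ≤ s ^ 2 + 1), div_eq_mul_inv]
  ring

lemma F_eq_smul_integral_FSubstIntegrand {n : ℕ} {α a ξ c : ℝ} (ha : a ≠ 0) (hξ : ξ ≠ a)
    (hc : c * (1 + a ^ 2) = a - ξ) :
    F n α a ξ = c • ((c ^ 2 * (1 + a ^ 2)) ^ ((α - n - 2) / 2) * (c * a * c ^ (n - 2)) *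
      ∫ s in (-a)..((a * ξ + 1) / (a - ξ)), FSubstIntegrand n α a s) := by
  have hupper : c * ((a * ξ + 1) / (a - ξ)) + a * c = 1 := by
    have : a - ξ ≠ 0 := sub_ne_zero.mpr (Ne.symm hξ)
    field_simp
    linear_combination hc
  rw [← integral_const_mul, ← integral_congr fun s _ => FIntegrand_comp_affine ha hc s,
    smul_integral_comp_mul_add, hupper, show c * -a + a * c = 0 by ring]
  rfl

theorem stmt_8_general (n : ℕ) (α : ℝ) (a ξ : ℝ) (ha : 0 < a)
    (hξ : ξ < a) :
    F n α a ξ < 0 ↔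
      (∫ t in (-a)..((a * ξ + 1) / (a - ξ)),
        (t - 1 / a) * (t + a) ^ (n - 2) /
          (t ^ 2 + 1) ^ (((n : ℝ) + 2 - α) / 2)) < 0 := by
  set c := (a - ξ) / (1 + a ^ 2)
  have hc_pos : 0 < c := div_pos (sub_pos.mpr hξ) (by positivity)
  have hc : c * (1 + a ^ 2) = a - ξ := div_mul_cancel₀ _ (by positivity)
  have hK : 0 < (c ^ 2 * (1 + a ^ 2)) ^ ((α - n - 2) / 2) * (c * a * c ^ (n - 2)) := by
    positivity
  rw [F_eq_smul_integral_FSubstIntegrand ha.ne' hξ.ne hc, smul_neg_iff_of_pos_left hc_pos,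
    ← smul_eq_mul, smul_neg_iff_of_pos_left hK]
  rfl

theorem stmt_8 (n : ℕ) (hn : 2 ≤ n) (α : ℝ) (a ξ : ℝ) (ha : 0 < a)
    (hξ0 : 0 ≤ ξ) (hξ : ξ < a) :
    F n α a ξ < 0 ↔
      (∫ t in (-a)..((a * ξ + 1) / (a - ξ)),
        (t - 1 / a) * (t + a) ^ (n - 2) /
          (t ^ 2 + 1) ^ (((n : ℝ) + 2 - α) / 2)) < 0 :=
  stmt_8_general n α a ξ ha hξ
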